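/- Let k ≥ 1 and let G be a connected finite simple graph on at least k+2 vertices that contains no induced subgraph isomorphic to C_3, to K_{2,k+1}, or to the join K_2 ∨ (empty graph on k vertices). Then ppt_k(G) = 1 if and only if G has a minimum dominating set S such that every vertex in S is a k-strong support vertex of G. -/

import Mathlib

namespace PowerProp

open SimpleGraph

variable {V : Type*} {α β : Type*}

/-- The closed neighborhood `N[S]` of a set of vertices. -/
def closedNbhd (G : SimpleGraph V) (S : Set V) : Set V :=
  S ∪ ⋃ v ∈ S, G.neighborSet v

/-- One propagation step of the `k`-power domination process. -/
def propStep (k : ℕ) (G : SimpleGraph V) (S : Set V) : Set V :=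
  S ∪ {w | ∃ v ∈ S, w ∈ G.neighborSet v \ S ∧ (G.neighborSet v \ S).ncard ≤ k}

/-- `S^[t]`: the set observed after `t` steps (step 1 is the domination step). -/
def powerIter (k : ℕ) (G : SimpleGraph V) (S : Set V) : ℕ → Set V
  | 0 => S
  | 1 => closedNbhd G S
  | (t + 2) => propStep k G (powerIter k G S (t + 1))

/-- `S` is a `k`-power dominating set of `G`. -/
def IsPDS (k : ℕ) (G : SimpleGraph V) (S : Set V) : Prop :=
  ∃ l, powerIter k G S l = Set.univ

/-- The `k`-power domination number `γ_{P,k}(G)`. -/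
noncomputable def pdNum (k : ℕ) (G : SimpleGraph V) : ℕ :=
  sInf {n | ∃ S : Set V, S.ncard = n ∧ IsPDS k G S}

/-- `S` is a minimum `k`-power dominating set of `G`. -/
def IsMinPDS (k : ℕ) (G : SimpleGraph V) (S : Set V) : Prop :=
  IsPDS k G S ∧ S.ncard = pdNum k G

/-- `ppt_k(G,S)`, the `k`-power propagation time of `G` with `S`. -/
noncomputable def pptOf (k : ℕ) (G : SimpleGraph V) (S : Set V) : ℕ :=
  sInf {l | powerIter k G S l = Set.univ}

/-- `ppt_k(G)`, the (minimum) `k`-power propagation time of `G`. -/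
noncomputable def ppt (k : ℕ) (G : SimpleGraph V) : ℕ :=
  sInf {t | ∃ S : Set V, IsMinPDS k G S ∧ pptOf k G S = t}

end PowerProp

open SimpleGraph

namespace PowerProp

variable {W : Type*}

/-- `S` is a dominating set of `G`. -/
def IsDomSet (G : SimpleGraph W) (S : Set W) : Prop :=
  ∀ v ∉ S, ∃ u ∈ S, G.Adj u v

/-- The domination number `γ(G)`. -/
noncomputable def domNum (G : SimpleGraph W) : ℕ :=
  sInf {n | ∃ S : Set W, S.ncard = n ∧ IsDomSet G S}

/-- A leaf is a vertex of degree 1. -/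
def IsLeaf (G : SimpleGraph W) (v : W) : Prop :=
  (G.neighborSet v).ncard = 1

/-- A `k`-strong support vertex is a vertex adjacent to at least `k+1` leaves. -/
def IsKStrongSupport (k : ℕ) (G : SimpleGraph W) (v : W) : Prop :=
  k + 1 ≤ (G.neighborSet v ∩ {u | IsLeaf G u}).ncard

end PowerProp

namespace PowerProp

/-- The join `K_2 ∨ K̄_k`, realized on `Fin (k+2)`: vertices `0` and `1` are
adjacent to each other and to everything else; vertices `≥ 2` form an independent set. -/
def joinK2Empty (k : ℕ) : SimpleGraph (Fin (k + 2)) :=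
  SimpleGraph.fromRel (fun i _ => (i : ℕ) < 2)

end PowerProp

/-!
In a triangle-free graph without induced `K_{2,k+1}`, let `S` be a dominating set and `v ∈ S` a
vertex with a non-leaf neighbour `u` and at most `k` leaves. Then `S \ {v}` is still `k`-power
dominating: the vertices missed by `N[S \ {v}]` lie in `N[v]`; `u` is forced by a neighbour `w ≠ v`,
which is not adjacent to `v` and so has at most `k` unobserved neighbours, all common with `v`; then
`u` forces `v`, and `v` forces its leaves. Hence every vertex of a minimum power dominating set that
dominates is a `k`-strong support vertex, or has only leaf neighbours, which in a connected graph on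
at least `k + 2` vertices makes it one anyway.

Conversely, the `k + 1` leaves at a `k`-strong support vertex `v` can only be forced by `v`, which
never has at most `k` unobserved neighbours while they are unobserved; so every power dominating set
meets `{v} ∪ L(v)`. These sets are pairwise disjoint, so a dominating set of `k`-strong support
vertices is a minimum power dominating set, and it observes the graph after one step.
-/

namespace PowerProp

section Propagation

variable {V : Type*} {k : ℕ} {G : SimpleGraph V} {S A : Set V}

@[simp] lemma powerIter_zero : powerIter k G S 0 = S := rfl

@[simp] lemma powerIter_one : powerIter k G S 1 = closedNbhd G S := rfl

lemma mem_closedNbhd {w : V} : w ∈ closedNbhd G S ↔ w ∈ S ∨ ∃ v ∈ S, G.Adj v w := by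
  simp [closedNbhd]

lemma closedNbhd_eq_univ_iff : closedNbhd G S = Set.univ ↔ IsDomSet G S := by
  simp only [Set.eq_univ_iff_forall, mem_closedNbhd, IsDomSet]
  exact forall_congr' fun _ => or_iff_not_imp_left

lemma subset_propStep (A : Set V) : A ⊆ propStep k G A := Set.subset_union_left

lemma mem_propStep_of_adj {x w : V} (hx : x ∈ A) (hxw : G.Adj x w)
    (hcard : (G.neighborSet x \ A).ncard ≤ k) : w ∈ propStep k G A := by
  by_cases hw : w ∈ A
  · exact Or.inl hw
  · exact Or.inr ⟨x, hx, ⟨hxw, hw⟩, hcard⟩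

lemma IsDomSet.isPDS (hS : IsDomSet G S) : IsPDS k G S :=
  ⟨1, closedNbhd_eq_univ_iff.2 hS⟩

variable (k G) in
lemma exists_isMinPDS : ∃ S, IsMinPDS k G S := by
  obtain ⟨S, hcard, hS⟩ := Nat.sInf_mem (s := {n | ∃ S : Set V, S.ncard = n ∧ IsPDS k G S})
    ⟨_, Set.univ, rfl, 0, rfl⟩
  exact ⟨S, hS, hcard⟩

lemma pdNum_le_ncard (hS : IsPDS k G S) : pdNum k G ≤ S.ncard :=
  Nat.sInf_le ⟨S, rfl, hS⟩

lemma domNum_le_ncard (hS : IsDomSet G S) : domNum G ≤ S.ncard :=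
  Nat.sInf_le ⟨S, rfl, hS⟩

lemma pdNum_le_domNum : pdNum k G ≤ domNum G := by
  obtain ⟨S, hcard, hS⟩ := Nat.sInf_mem (s := {n | ∃ S : Set V, S.ncard = n ∧ IsDomSet G S})
    ⟨_, Set.univ, rfl, fun v hv => absurd (Set.mem_univ v) hv⟩
  exact (pdNum_le_ncard hS.isPDS).trans_eq hcard

lemma IsMinPDS.ncard_eq_domNum (hS : IsMinPDS k G S) (hdom : IsDomSet G S) :
    S.ncard = domNum G :=
  le_antisymm (hS.2 ▸ pdNum_le_domNum) (domNum_le_ncard hdom)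

lemma IsMinPDS.ne_univ (hS : IsMinPDS k G S) (hlt : pdNum k G < Nat.card V) : S ≠ Set.univ := by
  rintro rfl
  rw [← hS.2, Set.ncard_univ] at hlt
  exact hlt.false

lemma pdNum_lt_natCard [Finite V] {x y : V} (hxy : G.Adj x y) : pdNum k G < Nat.card V := by
  have : Nonempty V := ⟨x⟩
  have hdom : IsDomSet G {x}ᶜ := fun w hw => ⟨y, hxy.ne.symm, Set.notMem_compl_iff.1 hw ▸ hxy.symm⟩
  calc pdNum k G ≤ ({x}ᶜ : Set V).ncard := pdNum_le_ncard hdom.isPDS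
    _ = Nat.card V - 1 := by rw [Set.ncard_compl, Set.ncard_singleton]
    _ < Nat.card V := Nat.sub_lt Nat.card_pos Nat.one_pos

lemma powerIter_pptOf (hS : IsPDS k G S) : powerIter k G S (pptOf k G S) = Set.univ :=
  Nat.sInf_mem hS

variable (k G) in
lemma exists_pptOf_eq_ppt : ∃ S, IsMinPDS k G S ∧ pptOf k G S = ppt k G := by
  obtain ⟨S, hS⟩ := exists_isMinPDS k G
  exact Nat.sInf_mem (s := {t | ∃ S, IsMinPDS k G S ∧ pptOf k G S = t}) ⟨_, S, hS, rfl⟩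

lemma ppt_le_pptOf (hS : IsMinPDS k G S) : ppt k G ≤ pptOf k G S :=
  Nat.sInf_le ⟨S, hS, rfl⟩

lemma ppt_eq_one_iff_exists_isMinPDS_isDomSet (hlt : pdNum k G < Nat.card V) :
    ppt k G = 1 ↔ ∃ S, IsMinPDS k G S ∧ IsDomSet G S := by
  obtain ⟨S₀, hS₀, hppt⟩ := exists_pptOf_eq_ppt k G
  constructor
  · intro h
    refine ⟨S₀, hS₀, closedNbhd_eq_univ_iff.1 ?_⟩
    simpa [hppt, h] using powerIter_pptOf hS₀.1
  · rintro ⟨S, hS, hdom⟩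
    have hpos : ppt k G ≠ 0 := fun h0 =>
      hS₀.ne_univ hlt (by simpa [hppt, h0] using powerIter_pptOf hS₀.1)
    have hle : pptOf k G S ≤ 1 := Nat.sInf_le (closedNbhd_eq_univ_iff.2 hdom)
    have := (ppt_le_pptOf hS).trans hle
    omega

end Propagation

section Leaves

variable {V : Type*} {k : ℕ} {G : SimpleGraph V}

variable (G) in
def leafNeighborSet (v : V) : Set V :=
  G.neighborSet v ∩ {u | IsLeaf G u}

lemma IsLeaf.eq_of_adj {u x y : V} (hu : IsLeaf G u) (hx : G.Adj u x) (hy : G.Adj u y) :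
    x = y := by
  obtain ⟨a, ha⟩ := Set.ncard_eq_one.1 hu
  have hx' : x ∈ G.neighborSet u := hx
  have hy' : y ∈ G.neighborSet u := hy
  rw [ha] at hx' hy'
  exact hx'.trans hy'.symm

lemma exists_adj_ne_of_not_isLeaf {u v : V} (hu : ¬IsLeaf G u) (huv : G.Adj u v) :
    ∃ w, G.Adj u w ∧ w ≠ v := by
  by_contra! h
  exact hu (Set.ncard_eq_one.2 ⟨v, Set.eq_singleton_iff_unique_mem.2 ⟨huv, h⟩⟩)

lemma IsKStrongSupport.not_isLeaf (hk : 1 ≤ k) {v : V} (hv : IsKStrongSupport k G v) :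
    ¬IsLeaf G v := by
  intro hl
  have : (leafNeighborSet G v).ncard ≤ (G.neighborSet v).ncard :=
    Set.ncard_le_ncard Set.inter_subset_left (Set.finite_of_ncard_ne_zero (by rw [hl]; simp))
  unfold IsKStrongSupport at hv
  unfold IsLeaf at hl
  unfold leafNeighborSet at this
  omega

lemma eq_of_mem_insert_leafNeighborSet (hk : 1 ≤ k) {a b x : V} (ha : IsKStrongSupport k G a)
    (hb : IsKStrongSupport k G b) (hxa : x ∈ insert a (leafNeighborSet G a))
    (hxb : x ∈ insert b (leafNeighborSet G b)) : a = b := by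
  rcases hxa with rfl | ⟨hax, hx⟩ <;> rcases hxb with rfl | ⟨hbx, hx'⟩
  · rfl
  · exact absurd hx' (ha.not_isLeaf hk)
  · exact absurd hx (hb.not_isLeaf hk)
  · exact hx.eq_of_adj hax.symm hbx.symm

lemma isKStrongSupport_of_forall_isLeaf [Finite V] (hconn : G.Connected)
    (hcard : k + 2 ≤ Nat.card V) {v : V} (hv : ∀ u, G.Adj v u → IsLeaf G u) :
    IsKStrongSupport k G v := by
  have hadj : ∀ w, w ≠ v → G.Adj v w := by
    intro w hwv
    by_contra hvw
    obtain ⟨p⟩ := hconn.preconnected v w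
    obtain ⟨d, -, hd, hd'⟩ := p.exists_boundary_dart (insert v (G.neighborSet v))
      (Set.mem_insert v _) (by rintro (h | h) <;> contradiction)
    rcases hd with h | h
    · exact hd' (Or.inr (h ▸ d.adj))
    · exact hd' (Or.inl ((hv _ h).eq_of_adj d.adj h.symm))
  have hsub : ({v}ᶜ : Set V) ⊆ leafNeighborSet G v := fun w hw => ⟨hadj w hw, hv w (hadj w hw)⟩
  have := Set.ncard_le_ncard hsub
  rw [Set.ncard_compl, Set.ncard_singleton] at this
  unfold IsKStrongSupport
  unfold leafNeighborSet at this
  omega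

end Leaves

section ForbiddenSubgraphs

variable {V : Type*} {k : ℕ} {G : SimpleGraph V}

lemma not_adj_of_cliqueFree_three (hG : G.CliqueFree 3) {a b c : V} (hab : G.Adj a b)
    (hac : G.Adj a c) : ¬G.Adj b c := fun hbc =>
  isIndepSet_neighborSet_of_triangleFree _ hG a hab hac hbc.ne hbc

lemma ncard_commonNeighbors_le [Finite V] (hG : G.CliqueFree 3)
    (hK : ¬ Nonempty (completeBipartiteGraph (Fin 2) (Fin (k + 1)) ↪g G)) {v w : V}
    (hvw : v ≠ w) (hadj : ¬G.Adj v w) : (G.commonNeighbors v w).ncard ≤ k := by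
  by_contra! hcard
  have := Fintype.ofFinite V
  classical
  obtain ⟨g⟩ : Nonempty (Fin (k + 1) ↪ G.commonNeighbors v w) :=
    Function.Embedding.nonempty_of_card_le (by
      rw [Fintype.card_fin, ← Nat.card_eq_fintype_card, Nat.card_coe_set_eq]; exact hcard)
  have hv : ∀ i, G.Adj v (g i) := fun i => (g i).2.1
  have hw : ∀ i, G.Adj w (g i) := fun i => (g i).2.2
  have hinj : Function.Injective (Sum.elim ![v, w] fun i => (g i : V)) := by
    refine Function.Injective.sumElim ?_ (Subtype.val_injective.comp g.injective) ?_
    · intro i j h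
      fin_cases i <;> fin_cases j <;> simp_all [eq_comm]
    · intro i j h
      fin_cases i
      · exact (hv j).ne h
      · exact (hw j).ne h
  refine hK ⟨⟨⟨_, hinj⟩, ?_⟩⟩
  rintro (i | i) (j | j)
  · fin_cases i <;> fin_cases j <;> simp [hadj, G.adj_comm w v]
  · fin_cases i <;> simp [hv, hw]
  · fin_cases j <;> simp [G.adj_comm _ v, G.adj_comm _ w, hv, hw]
  · simp [not_adj_of_cliqueFree_three hG (hv i) (hv j)]

end ForbiddenSubgraphs

section StrongSupport

variable {V : Type*} [Finite V] {k : ℕ} {G : SimpleGraph V} {v : V}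

lemma disjoint_leafNeighborSet_propStep (hv : IsKStrongSupport k G v) {A : Set V}
    (hA : Disjoint (leafNeighborSet G v) A) : Disjoint (leafNeighborSet G v) (propStep k G A) := by
  rw [Set.disjoint_left] at hA ⊢
  rintro u hu (huA | ⟨x, -, ⟨hxu, -⟩, hcard⟩)
  · exact hA hu huA
  · obtain rfl : x = v := hu.2.eq_of_adj hxu.symm hu.1.symm
    have hsub : leafNeighborSet G x ⊆ G.neighborSet x \ A := fun z hz => ⟨hz.1, hA hz⟩
    exact Nat.not_succ_le_self k (hv.trans ((Set.ncard_le_ncard hsub).trans hcard))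

lemma IsPDS.exists_mem_insert_leafNeighborSet {T : Set V} (hT : IsPDS k G T)
    (hv : IsKStrongSupport k G v) : ∃ x ∈ T, x ∈ insert v (leafNeighborSet G v) := by
  by_contra! hT'
  have hdisj : ∀ t, Disjoint (leafNeighborSet G v) (powerIter k G T t) := by
    intro t
    induction t using Nat.twoStepInduction with
    | zero => exact Set.disjoint_left.2 fun u hu huT => hT' u huT (Or.inr hu)
    | one =>
      refine Set.disjoint_left.2 fun u hu hmem => ?_
      rcases mem_closedNbhd.1 hmem with huT | ⟨x, hxT, hxu⟩
      · exact hT' u huT (Or.inr hu)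
      · exact hT' x hxT (Or.inl (hu.2.eq_of_adj hxu.symm hu.1.symm))
    | more t _ ih => exact disjoint_leafNeighborSet_propStep hv ih
  obtain ⟨l, hl⟩ := hT
  obtain ⟨u, hu⟩ := Set.nonempty_of_ncard_ne_zero (s := leafNeighborSet G v) (by
    unfold IsKStrongSupport at hv; unfold leafNeighborSet; omega)
  exact Set.disjoint_left.1 (hdisj l) hu (hl ▸ Set.mem_univ u)

lemma ncard_le_of_forall_isKStrongSupport (hk : 1 ≤ k) {S T : Set V}
    (hS : ∀ v ∈ S, IsKStrongSupport k G v) (hT : IsPDS k G T) : S.ncard ≤ T.ncard := by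
  have : ∀ v, ∃ x, v ∈ S → x ∈ T ∧ x ∈ insert v (leafNeighborSet G v) := by
    intro v
    by_cases hv : v ∈ S
    · exact (hT.exists_mem_insert_leafNeighborSet (hS v hv)).imp fun _ hx _ => hx
    · exact ⟨v, fun h => absurd h hv⟩
  choose f hf using this
  refine Set.ncard_le_ncard_of_injOn f (fun v hv => (hf v hv).1) (fun a ha b hb hab => ?_)
  exact eq_of_mem_insert_leafNeighborSet hk (hS a ha) (hS b hb) (hf a ha).2 (hab ▸ (hf b hb).2)

lemma isMinPDS_of_forall_isKStrongSupport (hk : 1 ≤ k) {S : Set V} (hdom : IsDomSet G S)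
    (hS : ∀ v ∈ S, IsKStrongSupport k G v) : IsMinPDS k G S := by
  obtain ⟨T, hT, hcard⟩ := exists_isMinPDS k G
  exact ⟨hdom.isPDS, le_antisymm (hcard ▸ ncard_le_of_forall_isKStrongSupport hk hS hT)
    (pdNum_le_ncard hdom.isPDS)⟩

end StrongSupport

section Removal

variable {V : Type*} {k : ℕ} {G : SimpleGraph V} {S A : Set V} {u v : V}

lemma compl_closedNbhd_diff_singleton_subset (hS : IsDomSet G S) (v : V) :
    (closedNbhd G (S \ {v}))ᶜ ⊆ insert v (G.neighborSet v) := by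
  intro w hw
  rw [Set.mem_compl_iff, mem_closedNbhd, not_or] at hw
  by_cases hwS : w ∈ S
  · exact Or.inl (by_contra fun hwv => hw.1 ⟨hwS, hwv⟩)
  · obtain ⟨x, hxS, hxw⟩ := hS w hwS
    obtain rfl : x = v := by_contra fun hxv => hw.2 ⟨x, ⟨hxS, hxv⟩, hxw⟩
    exact Or.inr hxw

lemma mem_propStep_of_adj_of_compl_subset (hk : 1 ≤ k) (hG : G.CliqueFree 3)
    (hA : Aᶜ ⊆ insert v (G.neighborSet v)) (hu : u ∈ A) (huv : G.Adj u v) :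
    v ∈ propStep k G A := by
  refine mem_propStep_of_adj hu huv ?_
  have hsub : G.neighborSet u \ A ⊆ {v} := fun z ⟨huz, hzA⟩ =>
    (hA hzA).resolve_right fun hvz => not_adj_of_cliqueFree_three hG huv.symm hvz huz
  calc (G.neighborSet u \ A).ncard ≤ ({v} : Set V).ncard := Set.ncard_le_ncard hsub
    _ = 1 := Set.ncard_singleton v
    _ ≤ k := hk

lemma mem_propStep_of_adj_of_not_isLeaf [Finite V] (hG : G.CliqueFree 3)
    (hcommon : ∀ ⦃v w : V⦄, v ≠ w → ¬G.Adj v w → (G.commonNeighbors v w).ncard ≤ k)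
    (hA : Aᶜ ⊆ insert v (G.neighborSet v)) (hvu : G.Adj v u) (hu : ¬IsLeaf G u) :
    u ∈ propStep k G A := by
  obtain ⟨w, huw, hwv⟩ := exists_adj_ne_of_not_isLeaf hu hvu.symm
  have hvw : ¬G.Adj v w := not_adj_of_cliqueFree_three hG hvu.symm huw
  have hwA : w ∈ A := by_contra fun h => (hA h).elim hwv hvw
  refine mem_propStep_of_adj hwA huw.symm ((Set.ncard_le_ncard ?_).trans (hcommon hwv.symm hvw))
  rintro z ⟨hwz, hzA⟩
  rcases hA hzA with rfl | hvz
  · exact absurd hwz.symm hvw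
  · exact ⟨hvz, hwz⟩

lemma propStep_iterate_eq_univ [Finite V] (hk : 1 ≤ k) (hG : G.CliqueFree 3)
    (hcommon : ∀ ⦃v w : V⦄, v ≠ w → ¬G.Adj v w → (G.commonNeighbors v w).ncard ≤ k)
    (hA : Aᶜ ⊆ insert v (G.neighborSet v)) (hv : ¬IsKStrongSupport k G v) (hvu : G.Adj v u)
    (hu : ¬IsLeaf G u) : (propStep k G)^[3] A = Set.univ := by
  set A₂ := propStep k G A
  set A₃ := propStep k G A₂
  have h₂ : A₂ᶜ ⊆ insert v (leafNeighborSet G v) := by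
    intro w hw
    rcases hA (fun h => hw (subset_propStep A h)) with rfl | hvw
    · exact Or.inl rfl
    · exact Or.inr ⟨hvw, by_contra fun hw' =>
        hw (mem_propStep_of_adj_of_not_isLeaf hG hcommon hA hvw hw')⟩
  have hvA₃ : v ∈ A₃ :=
    mem_propStep_of_adj_of_compl_subset hk hG
      (h₂.trans (Set.insert_subset_insert Set.inter_subset_left))
      (mem_propStep_of_adj_of_not_isLeaf hG hcommon hA hvu hu) hvu.symm
  have h₃ : A₃ᶜ ⊆ leafNeighborSet G v := by
    intro w hw
    rcases h₂ (fun h => hw (subset_propStep A₂ h)) with rfl | hw'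
    · exact absurd hvA₃ hw
    · exact hw'
  have hcard : (G.neighborSet v \ A₃).ncard ≤ k :=
    (Set.ncard_le_ncard fun z hz => h₃ hz.2).trans (Nat.le_of_lt_succ (not_le.1 hv))
  refine Set.eq_univ_of_forall fun w => ?_
  by_cases hw : w ∈ A₃
  · exact subset_propStep A₃ hw
  · exact mem_propStep_of_adj hvA₃ (h₃ hw).1 hcard

lemma IsDomSet.isPDS_diff_singleton [Finite V] (hk : 1 ≤ k) (hG : G.CliqueFree 3)
    (hcommon : ∀ ⦃v w : V⦄, v ≠ w → ¬G.Adj v w → (G.commonNeighbors v w).ncard ≤ k)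
    (hS : IsDomSet G S) (hv : ¬IsKStrongSupport k G v) (hvu : G.Adj v u) (hu : ¬IsLeaf G u) :
    IsPDS k G (S \ {v}) :=
  ⟨4, propStep_iterate_eq_univ hk hG hcommon (compl_closedNbhd_diff_singleton_subset hS v) hv hvu
    hu⟩

lemma IsMinPDS.isKStrongSupport [Finite V] (hk : 1 ≤ k) (hconn : G.Connected)
    (hcard : k + 2 ≤ Nat.card V) (hG : G.CliqueFree 3)
    (hcommon : ∀ ⦃v w : V⦄, v ≠ w → ¬G.Adj v w → (G.commonNeighbors v w).ncard ≤ k)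
    (hS : IsMinPDS k G S) (hdom : IsDomSet G S) (hvS : v ∈ S) : IsKStrongSupport k G v := by
  by_contra hv
  obtain ⟨u, hvu, hu⟩ : ∃ u, G.Adj v u ∧ ¬IsLeaf G u := by
    by_contra! h
    exact hv (isKStrongSupport_of_forall_isLeaf hconn hcard h)
  have := pdNum_le_ncard (hdom.isPDS_diff_singleton hk hG hcommon hv hvu hu)
  have := Set.ncard_sdiff_singleton_lt_of_mem hvS
  have := hS.2
  omega

end Removal

end PowerProp

open PowerProp in
theorem ppt_eq_one_iff_general {V : Type*} [Fintype V]
    (k : ℕ) (hk : 1 ≤ k) (G : SimpleGraph V) (hconn : G.Connected)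
    (hcard : k + 2 ≤ Fintype.card V)
    (hC3 : ¬ Nonempty (cycleGraph 3 ↪g G))
    (hK2k1 : ¬ Nonempty (completeBipartiteGraph (Fin 2) (Fin (k + 1)) ↪g G)) :
    ppt k G = 1 ↔
      ∃ S : Set V, IsDomSet G S ∧ S.ncard = domNum G ∧
        ∀ v ∈ S, IsKStrongSupport k G v := by
  have hcard' : k + 2 ≤ Nat.card V := Nat.card_eq_fintype_card (α := V) ▸ hcard
  have hG : G.CliqueFree 3 := by
    by_contra h
    exact hC3 ⟨cycleGraph_three_eq_top ▸ topEmbeddingOfNotCliqueFree h⟩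
  have hcommon := fun v w => ncard_commonNeighbors_le (v := v) (w := w) hG hK2k1
  have : Nontrivial V := Fintype.one_lt_card_iff_nontrivial.1 (by omega)
  obtain ⟨x⟩ := hconn.nonempty
  obtain ⟨y, hxy⟩ := hconn.preconnected.exists_adj_of_nontrivial x
  rw [ppt_eq_one_iff_exists_isMinPDS_isDomSet (pdNum_lt_natCard hxy)]
  constructor
  · rintro ⟨S, hS, hdom⟩
    exact ⟨S, hdom, hS.ncard_eq_domNum hdom,
      fun v hv => hS.isKStrongSupport hk hconn hcard' hG hcommon hdom hv⟩
  · rintro ⟨S, hdom, -, hsupp⟩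
    exact ⟨S, isMinPDS_of_forall_isKStrongSupport hk hdom hsupp, hdom⟩

open PowerProp in
/-- For a connected graph `G` on at least `k+2` vertices with no induced `C_3`,
`K_{2,k+1}`, or `K_2 ∨ K̄_k`, one has `ppt_k(G) = 1` iff `G` has a minimum
dominating set consisting of `k`-strong support vertices. -/
theorem ppt_eq_one_iff {V : Type*} [Fintype V]
    (k : ℕ) (hk : 1 ≤ k) (G : SimpleGraph V) (hconn : G.Connected)
    (hcard : k + 2 ≤ Fintype.card V)
    (hC3 : ¬ Nonempty (cycleGraph 3 ↪g G))
    (hK2k1 : ¬ Nonempty (completeBipartiteGraph (Fin 2) (Fin (k + 1)) ↪g G))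
    (hjoin : ¬ Nonempty (joinK2Empty k ↪g G)) :
    ppt k G = 1 ↔
      ∃ S : Set V, IsDomSet G S ∧ S.ncard = domNum G ∧
        ∀ v ∈ S, IsKStrongSupport k G v :=
  ppt_eq_one_iff_general k hk G hconn hcard hC3 hK2k1
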